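/- arXiv:2410.06307 — 2 statements merged into one kernel-verified Lean document; each statement's English description precedes it below -/
import Mathlib

section
/- (Lemma BIASBOUND, span norm bound, k = 1 case.) Assume ρ₁ > 0. If (g, h) ∈ ℝ × ℝ^S satisfies the ν-Bellman equation, then the span of h is bounded by the span of the modified reward divided by ρ₁: ‖h‖_sp ≤ ‖r_ν‖_sp / ρ₁, where ‖r_ν‖_sp = max_{s,a} r_ν(s,a) − min_{s,a} r_ν(s,a). -/
open Finset

def IsStochastic {n : ℕ} (P : Matrix (Fin n) (Fin n) ℝ) : Prop :=
  (∀ i j, 0 ≤ P i j) ∧ ∀ i, ∑ j, P i j = 1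

/-- The modified reward `r_ν`: `r_ν(s,0) = r(s,0)` and `r_ν(s,1) = r(s,1) − ν`. -/
def rnu {n : ℕ} (r : Fin n → Bool → ℝ) (ν : ℝ) (s : Fin n) (a : Bool) : ℝ :=
  r s a - if a then ν else 0

/-- `(g, h)` satisfies the `ν`-Bellman equation. -/
def BellmanEq {n : ℕ} (P0 P1 : Matrix (Fin n) (Fin n) ℝ) (r : Fin n → Bool → ℝ)
    (ν g : ℝ) (h : Fin n → ℝ) : Prop :=
  ∀ s, g + h s =
    max (rnu r ν s false + ∑ s', P0 s s' * h s')
        (rnu r ν s true + ∑ s', P1 s s' * h s')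

/-- The one-step ergodicity coefficient `ρ₁`. -/
noncomputable def rho1 {n : ℕ} (P0 P1 : Matrix (Fin n) (Fin n) ℝ) : ℝ :=
  ⨅ s : Fin n, ⨅ s' : Fin n, ⨅ a : Bool,
    ∑ s'', min ((if a then P1 else P0) s s'') (P0 s' s'')

/-- The span seminorm of a vector `h ∈ ℝ^S`. -/
noncomputable def spanS {n : ℕ} (h : Fin n → ℝ) : ℝ := (⨆ s, h s) - ⨅ s, h s

/-- The span of a reward function on `S × {0,1}`. -/
noncomputable def spanSA {n : ℕ} (r : Fin n → Bool → ℝ) : ℝ :=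
  (⨆ p : Fin n × Bool, r p.1 p.2) - ⨅ p : Fin n × Bool, r p.1 p.2

/-- Lemma BIASBOUND, `k = 1`: any solution `(g,h)` of the
`ν`-Bellman equation satisfies `‖h‖_sp ≤ ‖r_ν‖_sp / ρ₁`. -/
theorem stmt18 {n : ℕ} (hn : 1 ≤ n)
    (P0 P1 : Matrix (Fin n) (Fin n) ℝ) (hP0 : IsStochastic P0) (hP1 : IsStochastic P1)
    (r : Fin n → Bool → ℝ) (ν : ℝ)
    (hρ : 0 < rho1 P0 P1)
    (g : ℝ) (h : Fin n → ℝ) (hBell : BellmanEq P0 P1 r ν g h) :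
    spanS h ≤ spanSA (rnu r ν) / rho1 P0 P1 := by
  haveI : Nonempty (Fin n) := Fin.pos_iff_nonempty.mp (by omega)
  obtain ⟨s0, hs0⟩ := Finite.exists_max h
  obtain ⟨s1, hs1⟩ := Finite.exists_min h
  have hsup : (⨆ s, h s) = h s0 :=
    le_antisymm (ciSup_le hs0) (le_ciSup (Finite.bddAbove_range h) s0)
  have hinf : (⨅ s, h s) = h s1 :=
    le_antisymm (ciInf_le (Finite.bddBelow_range h) s1) (le_ciInf hs1)
  obtain ⟨a, ha⟩ : ∃ a : Bool, g + h s0 =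
      rnu r ν s0 a + ∑ s', (if a then P1 else P0) s0 s' * h s' := by
    rcases max_choice (rnu r ν s0 false + ∑ s', P0 s0 s' * h s')
        (rnu r ν s0 true + ∑ s', P1 s0 s' * h s') with hc | hc
    · exact ⟨false, by simpa [hc] using hBell s0⟩
    · exact ⟨true, by simpa [hc] using hBell s0⟩
  set P : Fin n → ℝ := fun s'' => (if a then P1 else P0) s0 s'' with hPdef
  set Q : Fin n → ℝ := fun s'' => P0 s1 s'' with hQdef
  have hPnn : ∀ s'', 0 ≤ P s'' := by
    intro s''; cases a <;> simp [hPdef] <;> [exact hP0.1 s0 s''; exact hP1.1 s0 s'']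
  have hQnn : ∀ s'', 0 ≤ Q s'' := fun s'' => hP0.1 s1 s''
  have hPsum : ∑ s'', P s'' = 1 := by
    cases a <;> simp [hPdef] <;> [exact hP0.2 s0; exact hP1.2 s0]
  have hQsum : ∑ s'', Q s'' = 1 := hP0.2 s1
  set c : ℝ := ∑ s'', min (P s'') (Q s'') with hcdef
  -- rho1 ≤ c
  have hρc : rho1 P0 P1 ≤ c := by
    have h1 : rho1 P0 P1 ≤ ⨅ s' : Fin n, ⨅ a : Bool,
        ∑ s'', min ((if a then P1 else P0) s0 s'') (P0 s' s'') :=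
      ciInf_le (Finite.bddBelow_range _) s0
    have h2 : (⨅ s' : Fin n, ⨅ a : Bool,
        ∑ s'', min ((if a then P1 else P0) s0 s'') (P0 s' s'')) ≤
        ⨅ a : Bool, ∑ s'', min ((if a then P1 else P0) s0 s'') (P0 s1 s'') :=
      ciInf_le (Finite.bddBelow_range _) s1
    have h3 : (⨅ a : Bool, ∑ s'', min ((if a then P1 else P0) s0 s'') (P0 s1 s'')) ≤
        ∑ s'', min ((if a then P1 else P0) s0 s'') (P0 s1 s'') :=
      ciInf_le (Finite.bddBelow_range _) a
    exact le_trans (le_trans h1 h2) h3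
  have hA : rnu r ν s0 a ≤ ⨆ p : Fin n × Bool, rnu r ν p.1 p.2 :=
    le_ciSup (f := fun p : Fin n × Bool => rnu r ν p.1 p.2) (Finite.bddAbove_range _) (s0, a)
  have hB : (⨅ p : Fin n × Bool, rnu r ν p.1 p.2) ≤ rnu r ν s1 false :=
    ciInf_le (f := fun p : Fin n × Bool => rnu r ν p.1 p.2) (Finite.bddBelow_range _) (s1, false)
  -- key: sum (P - Q) * h ≤ (1 - c)(h s0 - h s1)
  have key : ∑ s'', (P s'' - Q s'') * h s'' ≤ (1 - c) * (h s0 - h s1) := by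
    have e1 : ∑ s'', (P s'' - min (P s'') (Q s'')) * h s''
        ≤ ∑ s'', (P s'' - min (P s'') (Q s'')) * h s0 := by
      apply Finset.sum_le_sum
      intro i _
      exact mul_le_mul_of_nonneg_left (hs0 i) (by simp [sub_nonneg, min_le_left])
    have e2 : ∑ s'', (Q s'' - min (P s'') (Q s'')) * h s1
        ≤ ∑ s'', (Q s'' - min (P s'') (Q s'')) * h s'' := by
      apply Finset.sum_le_sum
      intro i _
      exact mul_le_mul_of_nonneg_left (hs1 i) (by simp [sub_nonneg, min_le_right])
    have e3 : ∑ s'', (P s'' - min (P s'') (Q s'')) * h s0 = (1 - c) * h s0 := by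
      rw [← Finset.sum_mul, Finset.sum_sub_distrib, hPsum, ← hcdef]
    have e4 : ∑ s'', (Q s'' - min (P s'') (Q s'')) * h s1 = (1 - c) * h s1 := by
      rw [← Finset.sum_mul, Finset.sum_sub_distrib, hQsum, ← hcdef]
    have e5 : ∑ s'', (P s'' - Q s'') * h s''
        = ∑ s'', (P s'' - min (P s'') (Q s'')) * h s''
          - ∑ s'', (Q s'' - min (P s'') (Q s'')) * h s'' := by
      rw [← Finset.sum_sub_distrib]
      apply Finset.sum_congr rfl
      intro i _; ring
    rw [e5]
    have := e3 ▸ e1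
    have := e4 ▸ e2
    linarith
  have hlow : rnu r ν s1 false + ∑ s'', Q s'' * h s'' ≤ g + h s1 := by
    rw [hBell s1]; exact le_max_left _ _
  have hspanMm : h s0 - h s1
      ≤ spanSA (rnu r ν) + (1 - rho1 P0 P1) * (h s0 - h s1) := by
    have hMm : 0 ≤ h s0 - h s1 := by linarith [hs1 s0]
    have hmono : (1 - c) * (h s0 - h s1) ≤ (1 - rho1 P0 P1) * (h s0 - h s1) :=
      mul_le_mul_of_nonneg_right (by linarith) hMm
    have hdiff : ∑ s'', (P s'' - Q s'') * h s''
        = ∑ s'', P s'' * h s'' - ∑ s'', Q s'' * h s'' := by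
      rw [← Finset.sum_sub_distrib]; apply Finset.sum_congr rfl; intro i _; ring
    have : h s0 - h s1 ≤ (rnu r ν s0 a - rnu r ν s1 false)
        + ∑ s'', (P s'' - Q s'') * h s'' := by
      rw [hdiff]; linarith [ha, hlow]
    have hsA : rnu r ν s0 a - rnu r ν s1 false ≤ spanSA (rnu r ν) := by
      unfold spanSA; linarith
    linarith
  have hMm : 0 ≤ h s0 - h s1 := by linarith [hs1 s0]
  have hfin : rho1 P0 P1 * (h s0 - h s1) ≤ spanSA (rnu r ν) := by nlinarith
  rw [spanS, hsup, hinf, le_div_iff₀ hρ]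
  linarith [hfin]
end

section
/- (Lemma LAGBOUND, bound on the budget multiplier, k = 1 case.) Assume ρ₁ > 0. Suppose ν ∈ ℝ and (g, h) ∈ ℝ × ℝ^S satisfy the ν-Bellman equation, that action 0 attains the maximum at every state (i.e. g + h(s) = r(s,0) + ∑_{s'} P⁰_{s,s'} h(s') for every s ∈ S), and that there exists a state s₀ at which action 1 also attains the maximum (i.e. g + h(s₀) = r(s₀,1) − ν + ∑_{s'} P¹_{s₀,s'} h(s')). Then ν ≤ ‖r‖_sp / ρ₁, where ‖r‖_sp = max_{s,a} r(s,a) − min_{s,a} r(s,a). -/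
open Finset

lemma span_step {n : ℕ} (p q hh : Fin n → ℝ)
    (hps : ∑ i, p i = 1) (hqs : ∑ i, q i = 1)
    (M m : ℝ) (hM : ∀ i, hh i ≤ M) (hm : ∀ i, m ≤ hh i) :
    ∑ i, p i * hh i - ∑ i, q i * hh i ≤
      (1 - ∑ i, min (p i) (q i)) * (M - m) := by
  have hA : ∑ i, (p i - min (p i) (q i)) * hh i ≤ ∑ i, (p i - min (p i) (q i)) * M := by
    refine Finset.sum_le_sum fun i _ => ?_
    exact mul_le_mul_of_nonneg_left (hM i) (by simp [min_le_left])
  have hB : ∑ i, (q i - min (p i) (q i)) * m ≤ ∑ i, (q i - min (p i) (q i)) * hh i := by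
    refine Finset.sum_le_sum fun i _ => ?_
    exact mul_le_mul_of_nonneg_left (hm i) (by simp [min_le_right])
  have e1 : ∑ i, (p i - min (p i) (q i)) * M = (1 - ∑ i, min (p i) (q i)) * M := by
    rw [← Finset.sum_mul, Finset.sum_sub_distrib, hps]
  have e2 : ∑ i, (q i - min (p i) (q i)) * m = (1 - ∑ i, min (p i) (q i)) * m := by
    rw [← Finset.sum_mul, Finset.sum_sub_distrib, hqs]
  have e3 : ∑ i, p i * hh i - ∑ i, q i * hh i =
      (∑ i, (p i - min (p i) (q i)) * hh i) - ∑ i, (q i - min (p i) (q i)) * hh i := by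
    simp only [sub_mul, Finset.sum_sub_distrib]
    ring
  rw [e3]
  nlinarith [hA, hB, e1, e2]

/-- Lemma LAGBOUND, `k = 1`: if `(g,h)` solves the `ν`-Bellman
equation, action `0` attains the maximum at every state, and action `1` also
attains the maximum at some state `s₀`, then `ν ≤ ‖r‖_sp / ρ₁`. -/
theorem stmt19 {n : ℕ} (hn : 1 ≤ n)
    (P0 P1 : Matrix (Fin n) (Fin n) ℝ) (hP0 : IsStochastic P0) (hP1 : IsStochastic P1)
    (r : Fin n → Bool → ℝ) (ν : ℝ)
    (hρ : 0 < rho1 P0 P1)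
    (g : ℝ) (h : Fin n → ℝ) (hBell : BellmanEq P0 P1 r ν g h)
    (h0 : ∀ s, g + h s = r s false + ∑ s', P0 s s' * h s')
    (s0 : Fin n)
    (hs0 : g + h s0 = r s0 true - ν + ∑ s', P1 s0 s' * h s') :
    ν ≤ spanSA r / rho1 P0 P1 := by
  haveI : NeZero n := ⟨by omega⟩
  set ρ := rho1 P0 P1 with hρdef
  -- ρ is a lower bound for each coefficient
  have hρle : ∀ (s s' : Fin n) (a : Bool),
      ρ ≤ ∑ s'', min ((if a then P1 else P0) s s'') (P0 s' s'') := by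
    intro s s' a
    calc ρ ≤ ⨅ s' : Fin n, ⨅ a : Bool,
          ∑ s'', min ((if a then P1 else P0) s s'') (P0 s' s'') :=
        ciInf_le (Finite.bddBelow_range _) s
      _ ≤ ⨅ a : Bool, ∑ s'', min ((if a then P1 else P0) s s'') (P0 s' s'') :=
        ciInf_le (Finite.bddBelow_range _) s'
      _ ≤ _ := ciInf_le (Finite.bddBelow_range _) a
  -- ρ ≤ 1
  have hρ1 : ρ ≤ 1 := by
    have := hρle ⟨0, by omega⟩ ⟨0, by omega⟩ false
    simpa [hP0.2 0] using this
  -- span r bound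
  set D := spanSA r with hD
  have hDle : ∀ (s s' : Fin n) (a a' : Bool), r s a - r s' a' ≤ D := by
    intro s s' a a'
    have h1 : r s a ≤ ⨆ p : Fin n × Bool, r p.1 p.2 :=
      le_ciSup (f := fun p : Fin n × Bool => r p.1 p.2) (Finite.bddAbove_range _) (s, a)
    have h2 : (⨅ p : Fin n × Bool, r p.1 p.2) ≤ r s' a' :=
      ciInf_le (Finite.bddBelow_range _) (s', a')
    rw [hD, spanSA]; linarith
  have hD0 : 0 ≤ D := by have := hDle s0 s0 false false; linarith
  -- max and min of h
  obtain ⟨smax, hsmax⟩ := Finite.exists_max h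
  obtain ⟨smin, hsmin⟩ := Finite.exists_min h
  have hH0 : 0 ≤ h smax - h smin := by have := hsmax smin; linarith
  -- span step for a pair (s, s', a): ∑ Pa s h - ∑ P0 s' h ≤ (1-ρ) H
  have key : ∀ (s s' : Fin n) (a : Bool),
      (∑ s'', (if a then P1 else P0) s s'' * h s'') - (∑ s'', P0 s' s'' * h s'')
        ≤ (1 - ρ) * (h smax - h smin) := by
    intro s s' a
    have hPa : IsStochastic (if a then P1 else P0) := by cases a <;> simpa
    have := span_step (fun s'' => (if a then P1 else P0) s s'') (fun s'' => P0 s' s'') h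
      (hPa.2 s) (hP0.2 s') (h smax) (h smin) hsmax hsmin
    refine this.trans ?_
    have := hρle s s' a
    nlinarith [hH0]
  -- bound on H : ρ * H ≤ D
  have hHD : ρ * (h smax - h smin) ≤ D := by
    have e1 := h0 smax
    have e2 := h0 smin
    have hk := key smax smin false
    simp only [Bool.false_eq_true, if_false] at hk
    have := hDle smax smin false false
    nlinarith
  -- bound on ν
  have hν : ν ≤ D + (1 - ρ) * (h smax - h smin) := by
    have e1 := h0 s0
    have hk := key s0 s0 true
    simp only [if_true] at hk
    have := hDle s0 s0 true false
    linarith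
  rw [le_div_iff₀ hρ]
  nlinarith [mul_le_mul_of_nonneg_left hν hρ.le,
    mul_le_mul_of_nonneg_left hHD (sub_nonneg.2 hρ1)]
end
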